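/- Let A and B be expansive d×d real matrices and ε = ln|det(A)|/ln|det(B)|. If sup over k ∈ ℤ of ‖A^{-k} B^{⌊εk⌋}‖ is finite, then sup over k ∈ ℤ of ‖B^{-⌊εk⌋} A^{k}‖ is also finite. -/

import Mathlib

open Matrix

noncomputable def opNorm {n : Type*} [Fintype n] [DecidableEq n] (A : Matrix n n ℝ) : ℝ :=
  ‖Matrix.toEuclideanCLM (𝕜 := ℝ) (n := n) A‖

def Expansive {n : Type*} [Fintype n] [DecidableEq n] (A : Matrix n n ℝ) : Prop :=
  IsUnit A ∧ ∀ μ ∈ spectrum ℂ (A.map Complex.ofReal), 1 < ‖μ‖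

noncomputable def eps {d : ℕ} (A B : Matrix (Fin d) (Fin d) ℝ) : ℝ :=
  Real.log |A.det| / Real.log |B.det|

/-!
Put `X k = A ^ (-k) * B ^ ⌊ε k⌋`; the matrices in the conclusion are the inverses `(X k)⁻¹`.
Since `|det A| = |det B| ^ ε`, we get `|det X k| = |det B| ^ (⌊ε k⌋ - ε k) ≥ |det B|⁻¹`,
and `|det B| > 1` because `B` is expansive. So all `X k` lie in the set of matrices of norm `≤ M`
with `|det| ≥ |det B|⁻¹`, a compact set of invertible matrices on which the continuous function
`X ↦ ‖X⁻¹‖` is bounded.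
-/

theorem IsCompact.exists_forall_norm_ringInverse_le {R : Type*} [NormedRing R]
    [HasSummableGeomSeries R] {K : Set R} (hK : IsCompact K) (hK_units : ∀ x ∈ K, IsUnit x) :
    ∃ C, ∀ x ∈ K, ‖Ring.inverse x‖ ≤ C := by
  have hcont : ContinuousOn (fun x : R ↦ ‖Ring.inverse x‖) K := fun x hx ↦ by
    obtain ⟨u, rfl⟩ := hK_units x hx
    exact (NormedRing.inverse_continuousAt u).continuousWithinAt.norm
  obtain ⟨C, hC⟩ := hK.bddAbove_image hcont
  exact ⟨C, fun x hx ↦ hC ⟨x, hx, rfl⟩⟩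

theorem inv_le_zpow_neg_mul_zpow_floor {a b : ℝ} (ha : 0 < a) (hb : 1 < b) (k : ℤ) :
    b⁻¹ ≤ a ^ (-k) * b ^ ⌊Real.log a / Real.log b * k⌋ := by
  have hlogb : 0 < Real.log b := Real.log_pos hb
  have hfloor := Int.sub_one_lt_floor (Real.log a / Real.log b * k)
  have hscale : Real.log a / Real.log b * k * Real.log b = k * Real.log a := by
    field_simp
  rw [← Real.log_le_log_iff (by positivity) (by positivity), Real.log_mul (by positivity)
    (by positivity), Real.log_zpow, Real.log_zpow, Real.log_inv]
  push_cast
  nlinarith [mul_lt_mul_of_pos_right hfloor hlogb]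

namespace Matrix

variable {n : Type*} [Fintype n] [DecidableEq n]

theorem det_zpow {R : Type*} [Field R] (A : Matrix n n R) (k : ℤ) :
    (A ^ k).det = A.det ^ k := by
  cases k with
  | ofNat m => simp [det_pow]
  | negSucc m =>
    rw [zpow_negSucc, det_nonsing_inv, Ring.inverse_eq_inv', det_pow, zpow_negSucc]

theorem inv_zpow_neg_mul_zpow {R : Type*} [CommRing R] {A B : Matrix n n R}
    (hA : IsUnit A.det) (hB : IsUnit B.det) (k j : ℤ) :
    (A ^ (-k) * B ^ j)⁻¹ = B ^ (-j) * A ^ k := by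
  rw [mul_inv_rev, ← zpow_neg hB, zpow_neg hA, nonsing_inv_nonsing_inv _ (hA.det_zpow k)]

open scoped Matrix.Norms.L2Operator in
theorem exists_forall_l2_opNorm_inv_le {𝕜 : Type*} [RCLike 𝕜] (M : ℝ) {c : ℝ} (hc : 0 < c) :
    ∃ C, ∀ X : Matrix n n 𝕜, ‖X‖ ≤ M → c ≤ ‖X.det‖ → ‖X⁻¹‖ ≤ C := by
  have := FiniteDimensional.proper_rclike 𝕜 (Matrix n n 𝕜)
  set K : Set (Matrix n n 𝕜) := Metric.closedBall 0 M ∩ {X | c ≤ ‖X.det‖}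
  have hK : IsCompact K :=
    (isCompact_closedBall 0 M).inter_right (isClosed_le continuous_const (by fun_prop))
  have hK_units : ∀ X ∈ K, IsUnit X := fun X hX ↦ by
    rw [isUnit_iff_isUnit_det, isUnit_iff_ne_zero, ← norm_pos_iff]
    exact hc.trans_le hX.2
  obtain ⟨C, hC⟩ := hK.exists_forall_norm_ringInverse_le hK_units
  refine ⟨C, fun X hXM hXc ↦ ?_⟩
  rw [nonsing_inv_eq_ringInverse]
  exact hC X ⟨by simpa using hXM, hXc⟩

end Matrix

theorem Expansive.one_lt_abs_det {n : Type*} [Fintype n] [DecidableEq n] [Nonempty n]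
    {A : Matrix n n ℝ} (hA : Expansive A) : 1 < |A.det| := by
  set Ac := A.map Complex.ofReal
  have hroots : Ac.charpoly.roots ≠ 0 := by
    rw [← Multiset.card_pos, ← (IsAlgClosed.splits Ac.charpoly).natDegree_eq_card_roots,
      charpoly_natDegree_eq_dim]
    exact Fintype.card_pos
  have hdet : |A.det| = ‖Ac.charpoly.roots.prod‖ := by
    rw [← det_eq_prod_roots_charpoly, ← Real.norm_eq_abs, ← Complex.norm_real]
    exact congrArg norm (RingHom.map_det Complex.ofRealHom A)
  rw [hdet]
  refine Multiset.prod_induction_nonempty (fun z : ℂ ↦ 1 < ‖z‖) (fun z w hz hw ↦ ?_) hroots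
    fun μ hμ ↦ hA.2 μ (mem_spectrum_of_isRoot_charpoly (Polynomial.isRoot_of_mem_roots hμ))
  rw [norm_mul]
  exact one_lt_mul_of_le_of_lt hz.le hw

theorem exists_pos_forall_le_abs_det_zpow_neg_mul_zpow_floor {d : ℕ}
    {A B : Matrix (Fin d) (Fin d) ℝ} (hA : IsUnit A) (hB : Expansive B) :
    ∃ c > 0, ∀ k : ℤ, c ≤ |(A ^ (-k) * B ^ ⌊eps A B * k⌋).det| := by
  rcases isEmpty_or_nonempty (Fin d) with hd | hd
  · exact ⟨1, one_pos, fun k ↦ by simp [det_isEmpty]⟩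
  · have hb := hB.one_lt_abs_det
    refine ⟨|B.det|⁻¹, inv_pos.2 (one_pos.trans hb), fun k ↦ ?_⟩
    rw [det_mul, det_zpow, det_zpow, abs_mul, abs_zpow, abs_zpow]
    exact inv_le_zpow_neg_mul_zpow_floor (abs_pos.2 ((isUnit_iff_isUnit_det A).1 hA).ne_zero)
      hb k

/-- If ‖A^{-k} B^{⌊εk⌋}‖ is uniformly bounded over k ∈ ℤ, so is ‖B^{-⌊εk⌋} A^{k}‖. -/
theorem sup_swap_bound {d : ℕ} (A B : Matrix (Fin d) (Fin d) ℝ)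
    (hA : Expansive A) (hB : Expansive B)
    (h : ∃ M : ℝ, ∀ k : ℤ, opNorm (A ^ (-k) * B ^ ⌊eps A B * k⌋) ≤ M) :
    ∃ M : ℝ, ∀ k : ℤ, opNorm (B ^ (-⌊eps A B * k⌋) * A ^ k) ≤ M := by
  obtain ⟨M, hM⟩ := h
  obtain ⟨c, hc, hdet⟩ := exists_pos_forall_le_abs_det_zpow_neg_mul_zpow_floor hA.1 hB
  obtain ⟨C, hC⟩ := exists_forall_l2_opNorm_inv_le (n := Fin d) (𝕜 := ℝ) M hc
  refine ⟨C, fun k ↦ ?_⟩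
  rw [← inv_zpow_neg_mul_zpow ((isUnit_iff_isUnit_det A).1 hA.1)
    ((isUnit_iff_isUnit_det B).1 hB.1)]
  exact hC _ (hM k) (hdet k)
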